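/- Assume that no nonzero X ∈ 𝔫 satisfies [k, X] = 0 for all k ∈ 𝔨. Let P_𝔫 be a Q-symmetric positive-definite endomorphism of 𝔫 commuting with ad(k)|_𝔫 for every k ∈ 𝔨, and let B_𝔱 be a Q-symmetric endomorphism of 𝔱. Then the derivative at s = 0 of the curve s ↦ Ric((s·B_𝔱) ⊕ P_𝔫) of extended Ricci endomorphisms annihilates 𝔱: (d/ds|_{s=0} Ric((s·B_𝔱) ⊕ P_𝔫)).T = 0 for every T ∈ 𝔱. -/

import Mathlib

open scoped RealInnerProductSpace

noncomputable section

variable {G : Type*} [NormedAddCommGroup G] [InnerProductSpace ℝ G] [FiniteDimensional ℝ G]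

/-- Orthogonal projection onto the subspace `W`, as a plain map `G → G`. -/
def pr (W : Submodule ℝ G) : G → G := fun v => (W.orthogonalProjectionOnto v : G)

/-- Orthogonal projection onto the subspace `W`, as a continuous linear endomorphism of `G`. -/
def projL (W : Submodule ℝ G) : G →L[ℝ] G := W.subtypeL.comp (W.orthogonalProjectionOnto)

variable (br : G →ₗ[ℝ] G →ₗ[ℝ] G)

/-- `br` is a Lie bracket making `G` a real Lie algebra, and the inner product `Q` of `G`
is ad-invariant: `Q([Z,X],Y) + Q(X,[Z,Y]) = 0`. -/
structure IsLieQ : Prop where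
  alt : ∀ x : G, br x x = 0
  jacobi : ∀ x y z : G, br x (br y z) + br y (br z x) + br z (br x y) = 0
  adInv : ∀ Z X Y : G, ⟪br Z X, Y⟫ + ⟪X, br Z Y⟫ = 0

/-- `𝔥 ⊆ 𝔨` are Lie subalgebras of `𝔤` with `[𝔨,𝔨] ⊆ 𝔥`. -/
structure IsToralPair (𝔥 𝔨 : Submodule ℝ G) : Prop where
  subalg_h : ∀ x ∈ 𝔥, ∀ y ∈ 𝔥, br x y ∈ 𝔥
  subalg_k : ∀ x ∈ 𝔨, ∀ y ∈ 𝔨, br x y ∈ 𝔨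
  h_le_k : 𝔥 ≤ 𝔨
  bk_in_h : ∀ x ∈ 𝔨, ∀ y ∈ 𝔨, br x y ∈ 𝔥

/-- no nonzero element of `𝔫 = 𝔨ᗮ` commutes with all of `𝔨`. -/
def NoTrivial (𝔨 : Submodule ℝ G) : Prop :=
  ∀ X ∈ 𝔨ᗮ, (∀ k ∈ 𝔨, br k X = 0) → X = 0

/-- `A` maps `W` into itself and is `Q`-symmetric on `W`. -/
def SymOn (W : Submodule ℝ G) (A : G →L[ℝ] G) : Prop :=
  (∀ v ∈ W, A v ∈ W) ∧ ∀ v ∈ W, ∀ w ∈ W, ⟪A v, w⟫ = ⟪v, A w⟫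

/-- `A` is positive definite on the subspace `W`. -/
def PosDefOn (W : Submodule ℝ G) (A : G →L[ℝ] G) : Prop :=
  ∀ v ∈ W, v ≠ 0 → 0 < ⟪A v, v⟫

/-- `A` commutes with `ad(k)|_𝔫` on `𝔫 = 𝔨ᗮ`, for every `k ∈ 𝔨`. -/
def CommAd (𝔨 : Submodule ℝ G) (A : G →L[ℝ] G) : Prop :=
  ∀ k ∈ 𝔨, ∀ X ∈ 𝔨ᗮ, A (br k X) = br k (A X)

/-- `Ainv` maps `W` to itself and is a two-sided inverse of `A` on the subspace `W`. -/
def InvOn' (W : Submodule ℝ G) (A Ainv : G →L[ℝ] G) : Prop :=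
  (∀ v ∈ W, Ainv v ∈ W) ∧ (∀ v ∈ W, Ainv (A v) = v) ∧ (∀ v ∈ W, A (Ainv v) = v)

/-- The explicit formula for the extended operator `S(P)(V).W` of the generalized submersion
metric `P = P_𝔱 ⊕ P_𝔫`, where `𝔱 = 𝔨 ⊓ 𝔥ᗮ`, `𝔪 = 𝔥ᗮ`, `𝔫 = 𝔨ᗮ`:
`S(P)(T).T' = 0`, `S(P)(T).Y = -[T,Y] + (1/2) P_𝔫⁻¹.[P_𝔱.T, Y]`,
`S(P)(X).T' = -(1/2) P_𝔫⁻¹.[X, P_𝔱.T']`,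
`S(P)(X).Y = -(1/2)[X,Y]_𝔪 - (1/2) P_𝔫⁻¹.(([X,P_𝔫.Y])_𝔫 - ([P_𝔫.X,Y])_𝔫)`. -/
def Sfun (𝔥 𝔨 : Submodule ℝ G) (pt pn pninv : G →L[ℝ] G) (V W : G) : G :=
  -(br (pr (𝔨 ⊓ 𝔥ᗮ) V) (pr 𝔨ᗮ W)) + (2⁻¹ : ℝ) • pninv (br (pt (pr (𝔨 ⊓ 𝔥ᗮ) V)) (pr 𝔨ᗮ W))
    - (2⁻¹ : ℝ) • pninv (br (pr 𝔨ᗮ V) (pt (pr (𝔨 ⊓ 𝔥ᗮ) W)))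
    - (2⁻¹ : ℝ) • pr 𝔥ᗮ (br (pr 𝔨ᗮ V) (pr 𝔨ᗮ W))
    - (2⁻¹ : ℝ) • pninv (pr 𝔨ᗮ (br (pr 𝔨ᗮ V) (pn (pr 𝔨ᗮ W)))
        - pr 𝔨ᗮ (br (pn (pr 𝔨ᗮ V)) (pr 𝔨ᗮ W)))

/-- The extended curvature `Rm(P)(V₁,V₂).W` of the generalized submersion metric
`P = P_𝔱 ⊕ P_𝔫`: `Rm(P)(V₁,V₂) = ad([V₁,V₂]_𝔥)|_𝔪 - [S(P)(V₁),S(P)(V₂)] - S(P)([V₁,V₂]_𝔪)`. -/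
def Rmfun (𝔥 𝔨 : Submodule ℝ G) (pt pn pninv : G →L[ℝ] G) (V₁ V₂ W : G) : G :=
  br (pr 𝔥 (br V₁ V₂)) W
    - (Sfun br 𝔥 𝔨 pt pn pninv V₁ (Sfun br 𝔥 𝔨 pt pn pninv V₂ W)
        - Sfun br 𝔥 𝔨 pt pn pninv V₂ (Sfun br 𝔥 𝔨 pt pn pninv V₁ W))
    - Sfun br 𝔥 𝔨 pt pn pninv (pr 𝔥ᗮ (br V₁ V₂)) W

/-- `Tr (𝔪 ∋ Z ↦ Rm(P)(V₁, Z).V₂)`, computed via an orthonormal basis of `𝔪 = 𝔥ᗮ`. -/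
def RicBilin (𝔥 𝔨 : Submodule ℝ G) (pt pn pninv : G →L[ℝ] G) (V₁ V₂ : G) : ℝ :=
  ∑ i, ⟪((stdOrthonormalBasis ℝ 𝔥ᗮ) i : G),
        Rmfun br 𝔥 𝔨 pt pn pninv V₁ ((stdOrthonormalBasis ℝ 𝔥ᗮ) i : G) V₂⟫

/-- `Ric` is the extended Ricci endomorphism of the generalized submersion metric
`P = P_𝔱 ⊕ P_𝔫`: it maps `𝔪 = 𝔥ᗮ` to `𝔪`, vanishes on `𝔪ᗮ`, and satisfies
`Q(Ric.V₁, V₂) = Tr(𝔪 ∋ Z ↦ Rm(P)(V₁,Z).V₂)` for all `V₁, V₂ ∈ 𝔪`. -/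
def IsExtRic (𝔥 𝔨 : Submodule ℝ G) (pt pn pninv Ric : G →L[ℝ] G) : Prop :=
  Ric = (projL 𝔥ᗮ).comp (Ric.comp (projL 𝔥ᗮ)) ∧
  ∀ V₁ ∈ 𝔥ᗮ, ∀ V₂ ∈ 𝔥ᗮ, ⟪Ric V₁, V₂⟫ = RicBilin br 𝔥 𝔨 pt pn pninv V₁ V₂

/-- `SN` is the operator `S_N(P_𝔫)` of the base space `N`, relative to the reductive
decomposition `𝔤 = 𝔨 ⊕ 𝔫`, defined by the implicit equation
`-2 Q(S_N(X).Y, Z) = Q([X,Y]_𝔫, Z) + Q([P_𝔫⁻¹.Z, X]_𝔫, P_𝔫.Y) + Q([P_𝔫⁻¹.Z, Y]_𝔫, P_𝔫.X)`. -/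
def IsSN (𝔨 : Submodule ℝ G) (pn pninv : G →L[ℝ] G) (SN : G → G → G) : Prop :=
  (∀ X ∈ 𝔨ᗮ, ∀ Y ∈ 𝔨ᗮ, SN X Y ∈ 𝔨ᗮ) ∧
  ∀ X ∈ 𝔨ᗮ, ∀ Y ∈ 𝔨ᗮ, ∀ Z ∈ 𝔨ᗮ,
    (-2 : ℝ) * ⟪SN X Y, Z⟫ =
      ⟪pr 𝔨ᗮ (br X Y), Z⟫ + ⟪pr 𝔨ᗮ (br (pninv Z) X), pn Y⟫ + ⟪pr 𝔨ᗮ (br (pninv Z) Y), pn X⟫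

/-- The curvature `Rm_N(P_𝔫)(X,Y).W` of the base space `N`:
`Rm_N(X,Y) = ad([X,Y]_𝔨)|_𝔫 - [S_N(X),S_N(Y)] - S_N([X,Y]_𝔫)`. -/
def RmNfun (𝔨 : Submodule ℝ G) (SN : G → G → G) (X Y W : G) : G :=
  br (pr 𝔨 (br X Y)) W - (SN X (SN Y W) - SN Y (SN X W)) - SN (pr 𝔨ᗮ (br X Y)) W

/-- `RicN` is the Ricci endomorphism `Ric_N(P_𝔫)` of the base space `N`, relative to the
operator `SN = S_N(P_𝔫)`: it maps `𝔫 = 𝔨ᗮ` to `𝔫`, vanishes on `𝔫ᗮ`, and satisfies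
`Q(RicN.X, Y) = Tr(𝔫 ∋ Z ↦ Rm_N(X,Z).Y)` for all `X, Y ∈ 𝔫`. -/
def IsBaseRic (𝔨 : Submodule ℝ G) (SN : G → G → G) (RicN : G →L[ℝ] G) : Prop :=
  RicN = (projL 𝔨ᗮ).comp (RicN.comp (projL 𝔨ᗮ)) ∧
  ∀ X ∈ 𝔨ᗮ, ∀ Y ∈ 𝔨ᗮ,
    ⟪RicN X, Y⟫ = ∑ i, ⟪((stdOrthonormalBasis ℝ 𝔨ᗮ) i : G),
      RmNfun br 𝔨 SN X ((stdOrthonormalBasis ℝ 𝔨ᗮ) i : G) Y⟫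

/-!
Along the curve `s ↦ (s • B_𝔱) ⊕ P_𝔫` the operator `S` is affine in `s`, so the extended
curvature and the Ricci form are quadratic in `s`, and the derivative at `0` is given by their
linear coefficient. For `T ∈ 𝔱` this coefficient is a trace over `𝔪 = 𝔱 ⊕ 𝔫`. Its `𝔱`-part
vanishes because the coefficient maps `𝔱` into `𝔫`. On `𝔫` the terms containing `ad T` cancel,
since `T` is central in `𝔨` (`[𝔨, 𝔨] ⊆ 𝔥 ⊥ 𝔱`); the remaining contractions over an orthonormal
basis `(fⱼ)` of `𝔫` vanish by skew-symmetry of the bracket and symmetry of `P_𝔫`, except for one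
term involving `Σⱼ [P_𝔫⁻¹ fⱼ, [B_𝔱 T, P_𝔫⁻¹ fⱼ]]`. That vector is `ad 𝔨`-invariant, so the
hypothesis on `𝔫` makes it orthogonal to `𝔫`.
-/

section InnerProductSpace

variable {E : Type*} [NormedAddCommGroup E] [InnerProductSpace ℝ E]

theorem OrthonormalBasis.sum_inner_smul_of_mem {ι : Type*} [Fintype ι] {W : Submodule ℝ E}
    (b : OrthonormalBasis ι ℝ W) {x : E} (hx : x ∈ W) :
    ∑ i, ⟪x, (b i : E)⟫ • (b i : E) = x := by
  simpa [real_inner_comm] using congrArg W.subtype (b.sum_repr' ⟨x, hx⟩)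

theorem OrthonormalBasis.sum_apply_apply_eq {ι F : Type*} [Fintype ι] [AddCommGroup F]
    [Module ℝ F] {W : Submodule ℝ E} (b : OrthonormalBasis ι ℝ W) (β : E →ₗ[ℝ] E →ₗ[ℝ] F)
    (A C : E →ₗ[ℝ] E) (hA : ∀ x ∈ W, A x ∈ W) (hC : ∀ x ∈ W, C x ∈ W)
    (hAC : ∀ x ∈ W, ∀ y ∈ W, ⟪A x, y⟫ = ⟪x, C y⟫) :
    ∑ i, β (A (b i)) (b i) = ∑ i, β (b i) (C (b i)) := by
  have hb : ∀ i, (b i : E) ∈ W := fun i => (b i).2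
  calc ∑ i, β (A (b i)) (b i)
      = ∑ i, ∑ j, ⟪A (b i), (b j : E)⟫ • β (b j) (b i) := by
        refine Finset.sum_congr rfl fun i _ => ?_
        conv_lhs => rw [← b.sum_inner_smul_of_mem (hA _ (hb i))]
        simp only [map_sum, map_smul, LinearMap.sum_apply, LinearMap.smul_apply]
    _ = ∑ j, ∑ i, ⟪C (b j), (b i : E)⟫ • β (b j) (b i) := by
        rw [Finset.sum_comm]
        refine Finset.sum_congr rfl fun j _ => Finset.sum_congr rfl fun i _ => ?_
        rw [hAC _ (hb i) _ (hb j), real_inner_comm]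
    _ = ∑ j, β (b j) (C (b j)) := by
        refine Finset.sum_congr rfl fun j _ => ?_
        conv_rhs => rw [← b.sum_inner_smul_of_mem (hC _ (hb j))]
        simp only [map_sum, map_smul]

variable {br : E →ₗ[ℝ] E →ₗ[ℝ] E}

theorem IsLieQ.inner_br_left (hLie : IsLieQ br) (z x y : E) : ⟪br z x, y⟫ = -⟪x, br z y⟫ :=
  eq_neg_of_add_eq_zero_left (hLie.adInv z x y)

theorem IsLieQ.inner_br_right (hLie : IsLieQ br) (z x y : E) : ⟪x, br z y⟫ = -⟪br z x, y⟫ := by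
  rw [hLie.inner_br_left, neg_neg]

theorem IsLieQ.br_swap (hLie : IsLieQ br) (x y : E) : br x y = -br y x := by
  have h := hLie.alt (x + y)
  simp only [map_add, LinearMap.add_apply, hLie.alt, zero_add, add_zero] at h
  linear_combination (norm := module) h

theorem IsLieQ.br_br (hLie : IsLieQ br) (k a b : E) :
    br k (br a b) = br (br k a) b + br a (br k b) := by
  have h := hLie.jacobi k a b
  rw [hLie.br_swap b (br k a), hLie.br_swap b k, map_neg] at h
  linear_combination (norm := module) h

variable {𝔥 𝔨 : Submodule ℝ E}

theorem IsToralPair.orthogonal_le (hpair : IsToralPair br 𝔥 𝔨) : 𝔨ᗮ ≤ 𝔥ᗮ :=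
  Submodule.orthogonal_le hpair.h_le_k

theorem IsToralPair.br_mem_orthogonal (hLie : IsLieQ br) (hpair : IsToralPair br 𝔥 𝔨)
    {k x : E} (hk : k ∈ 𝔨) (hx : x ∈ 𝔨ᗮ) : br k x ∈ 𝔨ᗮ := fun u hu => by
  rw [hLie.inner_br_right, (Submodule.mem_orthogonal 𝔨 x).1 hx _ (hpair.subalg_k k hk u hu),
    neg_zero]

theorem IsToralPair.br_mem_orthogonal' (hLie : IsLieQ br) (hpair : IsToralPair br 𝔥 𝔨)
    {k x : E} (hk : k ∈ 𝔨) (hx : x ∈ 𝔨ᗮ) : br x k ∈ 𝔨ᗮ := by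
  rw [hLie.br_swap]
  exact Submodule.neg_mem _ (hpair.br_mem_orthogonal hLie hk hx)

theorem IsToralPair.br_eq_zero_of_mem_inf (hLie : IsLieQ br) (hpair : IsToralPair br 𝔥 𝔨)
    {k t : E} (hk : k ∈ 𝔨) (ht : t ∈ 𝔨 ⊓ 𝔥ᗮ) : br k t = 0 := by
  have hkt : br k t ∈ 𝔥 := hpair.bk_in_h k hk t ht.1
  have hperp : ⟪br k t, br k t⟫ = 0 := by
    rw [hLie.inner_br_left, real_inner_comm,
      (Submodule.mem_orthogonal 𝔥 t).1 ht.2 _ (hpair.bk_in_h k hk _ (hpair.h_le_k hkt)),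
      neg_zero]
  exact inner_self_eq_zero.1 hperp

theorem InvOn'.symOn {W : Submodule ℝ E} {A Ainv : E →L[ℝ] E} (hA : SymOn W A)
    (hinv : InvOn' W A Ainv) : SymOn W Ainv := by
  refine ⟨hinv.1, fun x hx y hy => ?_⟩
  calc ⟪Ainv x, y⟫ = ⟪Ainv x, A (Ainv y)⟫ := by rw [hinv.2.2 y hy]
    _ = ⟪A (Ainv x), Ainv y⟫ := (hA.2 _ (hinv.1 x hx) _ (hinv.1 y hy)).symm
    _ = ⟪x, Ainv y⟫ := by rw [hinv.2.2 x hx]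

theorem InvOn'.commAd (hLie : IsLieQ br) (hpair : IsToralPair br 𝔥 𝔨) {A Ainv : E →L[ℝ] E}
    (hA : CommAd br 𝔨 A) (hinv : InvOn' 𝔨ᗮ A Ainv) : CommAd br 𝔨 Ainv := fun k hk x hx => by
  have hx' : Ainv x ∈ 𝔨ᗮ := hinv.1 x hx
  conv_lhs => rw [← hinv.2.2 x hx, ← hA k hk (Ainv x) hx']
  exact hinv.2.1 _ (hpair.br_mem_orthogonal hLie hk hx')

theorem hasDerivAt_zero_of_inner_quadratic {F : ℝ → E →L[ℝ] E} (β : E → E → ℝ)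
    (hF : ∀ v w, ∃ α γ : ℝ, ∀ s, ⟪F s v, w⟫ = α + s * β v w + s ^ 2 * γ) :
    ∃ D : E →L[ℝ] E, HasDerivAt F D 0 ∧ ∀ v w, ⟪D v, w⟫ = β v w := by
  -- interpolation at `s = -1, 0, 1`
  set D : E →L[ℝ] E := (2⁻¹ : ℝ) • (F 1 - F (-1))
  set Q : E →L[ℝ] E := (2⁻¹ : ℝ) • (F 1 + F (-1)) - F 0
  have hD : ∀ v w, ⟪D v, w⟫ = β v w := fun v w => by
    obtain ⟨α, γ, h⟩ := hF v w
    simp only [D, smul_apply, sub_apply,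
      real_inner_smul_left, inner_sub_left, h]
    ring
  have hFQ : F = fun s => F 0 + s • D + s ^ 2 • Q := funext fun s =>
    ContinuousLinearMap.ext fun v => ext_inner_right ℝ fun w => by
      obtain ⟨α, γ, h⟩ := hF v w
      simp only [D, Q, add_apply, smul_apply,
        sub_apply, inner_add_left, inner_sub_left, real_inner_smul_left, h]
      ring
  refine ⟨D, ?_, hD⟩
  rw [hFQ]
  simpa using (((hasDerivAt_id (0 : ℝ)).smul_const D).const_add (F 0)).fun_add
    ((hasDerivAt_pow 2 (0 : ℝ)).smul_const Q)

theorem IsLieQ.sum_br_apply_eq_zero {ι : Type*} [Fintype ι] (hLie : IsLieQ br)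
    {W : Submodule ℝ E} (b : OrthonormalBasis ι ℝ W) {A : E →L[ℝ] E} (hA : SymOn W A) :
    ∑ j, br (b j) (A (b j)) = 0 := by
  have h := b.sum_apply_apply_eq br A A hA.1 hA.1 hA.2
  simp only [ContinuousLinearMap.coe_coe, hLie.br_swap (A _), Finset.sum_neg_distrib] at h
  linear_combination (norm := module) (-2⁻¹ : ℝ) • h

theorem IsLieQ.sum_br_apply_inv_eq_zero {ι : Type*} [Fintype ι] (hLie : IsLieQ br)
    {W : Submodule ℝ E} (b : OrthonormalBasis ι ℝ W) {A Ainv : E →L[ℝ] E} (hA : SymOn W A)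
    (hinv : InvOn' W A Ainv) :
    ∑ j, br (A (b j)) (Ainv (b j)) = 0 := by
  have h := b.sum_apply_apply_eq (br.compl₂ (Ainv : E →ₗ[ℝ] E)) A A hA.1 hA.1 hA.2
  simp only [LinearMap.compl₂_apply, ContinuousLinearMap.coe_coe, hinv.2.1 _ (b _).2,
    hLie.alt, Finset.sum_const_zero] at h
  exact h

variable {ι : Type*} [Fintype ι] (b : OrthonormalBasis ι ℝ 𝔨ᗮ) {pn pninv : E →L[ℝ] E}

theorem sum_br_apply_inv_br_inv_eq (hpn : SymOn 𝔨ᗮ pn) (hpninv : InvOn' 𝔨ᗮ pn pninv)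
    (hinvComm : CommAd br 𝔨 pninv) {k : E} (hk : k ∈ 𝔨) :
    ∑ j, br (pn (b j)) (pninv (br k (pninv (b j)))) = ∑ j, br (b j) (br k (pninv (b j))) := by
  have h := b.sum_apply_apply_eq (br.compl₂ ((pninv : E →ₗ[ℝ] E) ∘ₗ br k ∘ₗ pninv)) pn pn
    hpn.1 hpn.1 hpn.2
  simp only [LinearMap.compl₂_apply, LinearMap.comp_apply, ContinuousLinearMap.coe_coe,
    hpninv.2.1 _ (b _).2] at h
  rw [h]
  exact Finset.sum_congr rfl fun j _ => by rw [hinvComm k hk _ (b j).2]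

theorem sum_br_inv_br_inv_eq (hinv : SymOn 𝔨ᗮ pninv) (hinvComm : CommAd br 𝔨 pninv)
    {k : E} (hk : k ∈ 𝔨) :
    ∑ j, br (b j) (pninv (br k (pninv (b j)))) = ∑ j, br (pninv (b j)) (br k (pninv (b j))) := by
  have h := b.sum_apply_apply_eq (br.compl₂ (br k ∘ₗ (pninv : E →ₗ[ℝ] E))) pninv pninv
    hinv.1 hinv.1 hinv.2
  simp only [LinearMap.compl₂_apply, LinearMap.comp_apply, ContinuousLinearMap.coe_coe] at h
  rw [h]
  exact Finset.sum_congr rfl fun j _ => by rw [hinvComm k hk _ (hinv.1 _ (b j).2)]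

theorem br_sum_br_inv_br_inv_eq_zero (hLie : IsLieQ br) (hpair : IsToralPair br 𝔥 𝔨)
    (hinvComm : CommAd br 𝔨 pninv) {k k' : E} (hk' : k' ∈ 𝔨)
    (hkk' : br k' k = 0) :
    br k' (∑ j, br (pninv (b j)) (br k (pninv (b j)))) = 0 := by
  set β := br.compl₁₂ (pninv : E →ₗ[ℝ] E) (br k ∘ₗ (pninv : E →ₗ[ℝ] E))
  have hterm : ∀ j, br k' (br (pninv (b j)) (br k (pninv (b j))))
      = β (br k' (b j)) (b j) + β (b j) (br k' (b j)) := fun j => by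
    simp only [β, LinearMap.compl₁₂_apply, LinearMap.comp_apply, ContinuousLinearMap.coe_coe,
      ← hinvComm k' hk' _ (b j).2, hLie.br_br k' (pninv _), hLie.br_br k' k, hkk',
      map_zero, LinearMap.zero_apply, zero_add]
  -- `ad k'` is skew and preserves `𝔨ᗮ`, so the two halves of the sum cancel
  have hskew := b.sum_apply_apply_eq β (br k') (-br k')
    (fun x hx => hpair.br_mem_orthogonal hLie hk' hx)
    (fun x hx => by simpa using 𝔨ᗮ.neg_mem (hpair.br_mem_orthogonal hLie hk' hx))
    (fun x _ y _ => by simp [hLie.inner_br_left])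
  simp only [map_sum, hterm, Finset.sum_add_distrib, hskew, LinearMap.neg_apply, map_neg,
    Finset.sum_neg_distrib, neg_add_cancel]

end InnerProductSpace

section Projection

theorem pr_mem (W : Submodule ℝ G) (v : G) : pr W v ∈ W := W.starProjection_apply_mem v

theorem pr_eq_self {W : Submodule ℝ G} {v : G} (h : v ∈ W) : pr W v = v :=
  Submodule.starProjection_eq_self_iff.2 h

theorem pr_eq_zero {W : Submodule ℝ G} {v : G} (h : v ∈ Wᗮ) : pr W v = 0 :=
  (Submodule.starProjection_apply_eq_zero_iff W).2 h

theorem inner_pr_left (W : Submodule ℝ G) (u v : G) : ⟪pr W u, v⟫ = ⟪u, pr W v⟫ :=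
  Submodule.inner_starProjection_left_eq_right W u v

theorem inner_pr_left_of_mem {W : Submodule ℝ G} {v : G} (hv : v ∈ W) (u : G) :
    ⟪pr W u, v⟫ = ⟪u, v⟫ := by
  rw [inner_pr_left, pr_eq_self hv]

theorem inner_pr_right_of_mem {W : Submodule ℝ G} {u : G} (hu : u ∈ W) (v : G) :
    ⟪u, pr W v⟫ = ⟪u, v⟫ := by
  rw [← inner_pr_left, pr_eq_self hu]

@[simp] theorem pr_add (W : Submodule ℝ G) (x y : G) : pr W (x + y) = pr W x + pr W y :=
  map_add W.starProjection x y

@[simp] theorem pr_sub (W : Submodule ℝ G) (x y : G) : pr W (x - y) = pr W x - pr W y :=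
  map_sub W.starProjection x y

@[simp] theorem pr_neg (W : Submodule ℝ G) (x : G) : pr W (-x) = -pr W x :=
  map_neg W.starProjection x

@[simp] theorem pr_smul (W : Submodule ℝ G) (c : ℝ) (x : G) : pr W (c • x) = c • pr W x :=
  map_smul W.starProjection c x

@[simp] theorem pr_zero (W : Submodule ℝ G) : pr W (0 : G) = 0 := map_zero W.starProjection

theorem OrthonormalBasis.sum_inner_apply_pr {ι κ : Type*} [Fintype ι] [Fintype κ]
    {M U : Submodule ℝ G} (e : OrthonormalBasis ι ℝ M) (b : OrthonormalBasis κ ℝ U)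
    (hUM : U ≤ M) (L : G →ₗ[ℝ] G) :
    ∑ i, ⟪(e i : G), L (pr U (e i))⟫ = ∑ a, ⟪(b a : G), L (b a)⟫ := by
  have hpr : ∀ i, pr U (e i) = ∑ a, ⟪(e i : G), (b a : G)⟫ • (b a : G) := fun i => by
    conv_lhs => rw [← b.sum_inner_smul_of_mem (pr_mem U (e i))]
    simp only [inner_pr_left_of_mem (b _).2]
  calc ∑ i, ⟪(e i : G), L (pr U (e i))⟫
      = ∑ a, ⟪∑ i, ⟪(b a : G), (e i : G)⟫ • (e i : G), L (b a)⟫ := by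
        simp only [hpr, map_sum, map_smul, inner_sum, sum_inner, real_inner_smul_left,
          real_inner_smul_right, real_inner_comm (e _ : G) (b _ : G)]
        exact Finset.sum_comm
    _ = ∑ a, ⟪(b a : G), L (b a)⟫ := by
        simp only [e.sum_inner_smul_of_mem (hUM (b _).2)]

theorem OrthonormalBasis.sum_inner_apply_eq_add {ι κ ι' : Type*} [Fintype ι] [Fintype κ]
    [Fintype ι'] {M U V : Submodule ℝ G} (e : OrthonormalBasis ι ℝ M)
    (bU : OrthonormalBasis κ ℝ U) (bV : OrthonormalBasis ι' ℝ V) (hU : U ≤ M) (hV : V ≤ M)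
    (hUV : ∀ v ∈ M, pr U v + pr V v = v) (L : G →ₗ[ℝ] G) :
    ∑ i, ⟪(e i : G), L (e i)⟫ = ∑ a, ⟪(bU a : G), L (bU a)⟫ + ∑ j, ⟪(bV j : G), L (bV j)⟫ := by
  rw [← e.sum_inner_apply_pr bU hU, ← e.sum_inner_apply_pr bV hV, ← Finset.sum_add_distrib]
  refine Finset.sum_congr rfl fun i _ => ?_
  rw [← inner_add_right, ← map_add, hUV _ (e i).2]

end Projection

section LieAlgebra

variable {br} {𝔥 𝔨 : Submodule ℝ G}

theorem IsToralPair.pr_add_pr (hpair : IsToralPair br 𝔥 𝔨) {v : G} (hv : v ∈ 𝔥ᗮ) :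
    pr (𝔨 ⊓ 𝔥ᗮ) v + pr 𝔨ᗮ v = v := by
  have hvk : v - pr 𝔨ᗮ v ∈ 𝔨 ⊓ 𝔥ᗮ := by
    refine ⟨?_, Submodule.sub_mem _ hv (hpair.orthogonal_le (pr_mem _ v))⟩
    have h := 𝔨ᗮ.sub_starProjection_mem_orthogonal v
    rwa [Submodule.orthogonal_orthogonal] at h
  have hn : pr (𝔨 ⊓ 𝔥ᗮ) (pr 𝔨ᗮ v) = 0 :=
    pr_eq_zero (Submodule.orthogonal_le inf_le_left (pr_mem _ v))
  have ht : pr (𝔨 ⊓ 𝔥ᗮ) v = v - pr 𝔨ᗮ v := by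
    conv_lhs => rw [← sub_add_cancel v (pr 𝔨ᗮ v), pr_add, pr_eq_self hvk, hn, add_zero]
  rw [ht, sub_add_cancel]

theorem NoTrivial.inner_eq_zero_of_br_eq_zero (hLie : IsLieQ br) (hpair : IsToralPair br 𝔥 𝔨)
    (hmax : NoTrivial br 𝔨) {x : G} (hx : ∀ k ∈ 𝔨, br k x = 0) {w : G} (hw : w ∈ 𝔨ᗮ) :
    ⟪x, w⟫ = 0 := by
  have hN : pr 𝔨ᗮ x = 0 := hmax _ (pr_mem _ x) fun k hk => by
    have hkN : br k (br k (pr 𝔨ᗮ x)) ∈ 𝔨ᗮ :=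
      hpair.br_mem_orthogonal hLie hk (hpair.br_mem_orthogonal hLie hk (pr_mem _ x))
    refine (inner_self_eq_zero (𝕜 := ℝ)).1 ?_
    rw [hLie.inner_br_left, inner_pr_left_of_mem hkN, hLie.inner_br_right, hx k hk,
      inner_zero_left, neg_zero, neg_zero]
  rw [← inner_pr_left_of_mem hw, hN, inner_zero_left]

theorem IsExtRic.inner_apply {pt pn pninv Ric : G →L[ℝ] G}
    (hRic : IsExtRic br 𝔥 𝔨 pt pn pninv Ric) (v w : G) :
    ⟪Ric v, w⟫ = RicBilin br 𝔥 𝔨 pt pn pninv (pr 𝔥ᗮ v) (pr 𝔥ᗮ w) := by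
  conv_lhs => rw [hRic.1]
  exact (inner_pr_left _ _ _).trans (hRic.2 _ (pr_mem _ _) _ (pr_mem _ _))

end LieAlgebra

section Variation

variable (𝔥 𝔨 : Submodule ℝ G) (pn pninv Bt : G →L[ℝ] G)

def sfunBilin (pt : G →L[ℝ] G) : G →ₗ[ℝ] G →ₗ[ℝ] G :=
  LinearMap.mk₂ ℝ (Sfun br 𝔥 𝔨 pt pn pninv)
    (fun _ _ _ => by simp only [Sfun, pr_add, map_add, map_sub, LinearMap.add_apply]; module)
    (fun _ _ _ => by simp only [Sfun, pr_smul, map_smul, map_sub, LinearMap.smul_apply]; module)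
    (fun _ _ _ => by simp only [Sfun, pr_add, map_add, map_sub]; module)
    (fun _ _ _ => by simp only [Sfun, pr_smul, map_smul, map_sub]; module)

def sfunDeriv : G →ₗ[ℝ] G →ₗ[ℝ] G :=
  LinearMap.mk₂ ℝ (fun V W => (2⁻¹ : ℝ) • pninv (br (Bt (pr (𝔨 ⊓ 𝔥ᗮ) V)) (pr 𝔨ᗮ W))
      - (2⁻¹ : ℝ) • pninv (br (pr 𝔨ᗮ V) (Bt (pr (𝔨 ⊓ 𝔥ᗮ) W))))
    (fun _ _ _ => by simp only [pr_add, map_add, LinearMap.add_apply]; module)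
    (fun _ _ _ => by simp only [pr_smul, map_smul, LinearMap.smul_apply]; module)
    (fun _ _ _ => by simp only [pr_add, map_add]; module)
    (fun _ _ _ => by simp only [pr_smul, map_smul]; module)

theorem sfunBilin_apply (pt : G →L[ℝ] G) (V W : G) :
    sfunBilin br 𝔥 𝔨 pn pninv pt V W = Sfun br 𝔥 𝔨 pt pn pninv V W := rfl

theorem sfunDeriv_apply (V W : G) : sfunDeriv br 𝔥 𝔨 pninv Bt V W =
    (2⁻¹ : ℝ) • pninv (br (Bt (pr (𝔨 ⊓ 𝔥ᗮ) V)) (pr 𝔨ᗮ W))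
      - (2⁻¹ : ℝ) • pninv (br (pr 𝔨ᗮ V) (Bt (pr (𝔨 ⊓ 𝔥ᗮ) W))) := rfl

theorem Sfun_smul (s : ℝ) (V W : G) :
    Sfun br 𝔥 𝔨 (s • Bt) pn pninv V W
      = sfunBilin br 𝔥 𝔨 pn pninv 0 V W + s • sfunDeriv br 𝔥 𝔨 pninv Bt V W := by
  simp only [sfunBilin_apply, sfunDeriv_apply, Sfun, smul_apply, zero_apply, map_smul, map_zero,
    LinearMap.smul_apply, LinearMap.zero_apply]
  module

def rmDeriv (V₁ W : G) : G →ₗ[ℝ] G where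
  toFun Z :=
    -(sfunBilin br 𝔥 𝔨 pn pninv 0 V₁ (sfunDeriv br 𝔥 𝔨 pninv Bt Z W)
      + sfunDeriv br 𝔥 𝔨 pninv Bt V₁ (sfunBilin br 𝔥 𝔨 pn pninv 0 Z W)
      - sfunBilin br 𝔥 𝔨 pn pninv 0 Z (sfunDeriv br 𝔥 𝔨 pninv Bt V₁ W)
      - sfunDeriv br 𝔥 𝔨 pninv Bt Z (sfunBilin br 𝔥 𝔨 pn pninv 0 V₁ W))
    - sfunDeriv br 𝔥 𝔨 pninv Bt (pr 𝔥ᗮ (br V₁ Z)) W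
  map_add' _ _ := by simp only [map_add, pr_add, LinearMap.add_apply]; abel
  map_smul' _ _ := by
    simp only [map_smul, pr_smul, LinearMap.smul_apply, RingHom.id_apply]; module

def ricDeriv (V₁ V₂ : G) : ℝ :=
  ∑ i, ⟪((stdOrthonormalBasis ℝ 𝔥ᗮ) i : G),
    rmDeriv br 𝔥 𝔨 pn pninv Bt V₁ V₂ ((stdOrthonormalBasis ℝ 𝔥ᗮ) i : G)⟫

theorem Rmfun_smul (s : ℝ) (V₁ Z W : G) :
    Rmfun br 𝔥 𝔨 (s • Bt) pn pninv V₁ Z W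
      = Rmfun br 𝔥 𝔨 0 pn pninv V₁ Z W + s • rmDeriv br 𝔥 𝔨 pn pninv Bt V₁ W Z
        - s ^ 2 • (sfunDeriv br 𝔥 𝔨 pninv Bt V₁ (sfunDeriv br 𝔥 𝔨 pninv Bt Z W)
          - sfunDeriv br 𝔥 𝔨 pninv Bt Z (sfunDeriv br 𝔥 𝔨 pninv Bt V₁ W)) := by
  simp only [Rmfun, Sfun_smul]
  simp only [← sfunBilin_apply, rmDeriv, LinearMap.coe_mk, AddHom.coe_mk, map_add, map_smul]
  module

theorem RicBilin_smul (V₁ V₂ : G) : ∃ γ : ℝ, ∀ s : ℝ,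
    RicBilin br 𝔥 𝔨 (s • Bt) pn pninv V₁ V₂
      = RicBilin br 𝔥 𝔨 0 pn pninv V₁ V₂ + s * ricDeriv br 𝔥 𝔨 pn pninv Bt V₁ V₂ + s ^ 2 * γ :=
  ⟨-∑ i, ⟪((stdOrthonormalBasis ℝ 𝔥ᗮ) i : G),
      sfunDeriv br 𝔥 𝔨 pninv Bt V₁ (sfunDeriv br 𝔥 𝔨 pninv Bt ((stdOrthonormalBasis ℝ 𝔥ᗮ) i) V₂)
      - sfunDeriv br 𝔥 𝔨 pninv Bt ((stdOrthonormalBasis ℝ 𝔥ᗮ) i)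
          (sfunDeriv br 𝔥 𝔨 pninv Bt V₁ V₂)⟫, fun s => by
    simp only [RicBilin, ricDeriv, Rmfun_smul, inner_add_right, inner_sub_right,
      real_inner_smul_right, Finset.sum_add_distrib, Finset.sum_sub_distrib, ← Finset.mul_sum]
    ring⟩

end Variation

section Vanishing

variable {br} {𝔥 𝔨 : Submodule ℝ G} {pn pninv Bt : G →L[ℝ] G}

theorem inner_sum_br_inv_br_inv_eq_zero {ι : Type*} [Fintype ι] (hLie : IsLieQ br)
    (hpair : IsToralPair br 𝔥 𝔨) (hmax : NoTrivial br 𝔨) (b : OrthonormalBasis ι ℝ 𝔨ᗮ)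
    (hinv : SymOn 𝔨ᗮ pninv) (hinvComm : CommAd br 𝔨 pninv) {t : G} (ht : t ∈ 𝔨 ⊓ 𝔥ᗮ)
    {w : G} (hw : w ∈ 𝔨ᗮ) :
    ⟪∑ j, br (b j) (pninv (br t (pninv (b j)))), w⟫ = 0 := by
  rw [sum_br_inv_br_inv_eq b hinv hinvComm ht.1]
  exact hmax.inner_eq_zero_of_br_eq_zero hLie hpair (fun k hk =>
    br_sum_br_inv_br_inv_eq_zero b hLie hpair hinvComm hk
      (hpair.br_eq_zero_of_mem_inf hLie hk ht)) hw

theorem sfunBilin_zero_apply_of_mem_inf {t : G} (ht : t ∈ 𝔨 ⊓ 𝔥ᗮ) (x : G) :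
    sfunBilin br 𝔥 𝔨 pn pninv 0 t x = -br t (pr 𝔨ᗮ x) := by
  simp [sfunBilin_apply, Sfun, pr_eq_self ht, pr_eq_zero (𝔨.le_orthogonal_orthogonal ht.1)]

theorem sfunBilin_zero_apply_of_mem_orthogonal {X : G} (hX : X ∈ 𝔨ᗮ) (x : G) :
    sfunBilin br 𝔥 𝔨 pn pninv 0 X x = -((2⁻¹ : ℝ) • pr 𝔥ᗮ (br X (pr 𝔨ᗮ x)))
      - (2⁻¹ : ℝ) • pninv (pr 𝔨ᗮ (br X (pn (pr 𝔨ᗮ x))) - pr 𝔨ᗮ (br (pn X) (pr 𝔨ᗮ x))) := by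
  simp [sfunBilin_apply, Sfun, pr_eq_self hX, pr_eq_zero (Submodule.orthogonal_le inf_le_left hX)]

theorem sfunDeriv_apply_of_mem_inf {t : G} (ht : t ∈ 𝔨 ⊓ 𝔥ᗮ) (x : G) :
    sfunDeriv br 𝔥 𝔨 pninv Bt t x = (2⁻¹ : ℝ) • pninv (br (Bt t) (pr 𝔨ᗮ x)) := by
  simp [sfunDeriv_apply, pr_eq_self ht, pr_eq_zero (𝔨.le_orthogonal_orthogonal ht.1)]

theorem sfunDeriv_apply_of_mem_orthogonal {X : G} (hX : X ∈ 𝔨ᗮ) (x : G) :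
    sfunDeriv br 𝔥 𝔨 pninv Bt X x = -((2⁻¹ : ℝ) • pninv (br X (Bt (pr (𝔨 ⊓ 𝔥ᗮ) x)))) := by
  simp [sfunDeriv_apply, pr_eq_self hX, pr_eq_zero (Submodule.orthogonal_le inf_le_left hX)]

theorem sfunDeriv_mem (hLie : IsLieQ br) (hpair : IsToralPair br 𝔥 𝔨)
    (hinv : ∀ x ∈ 𝔨ᗮ, pninv x ∈ 𝔨ᗮ) (hBt : SymOn (𝔨 ⊓ 𝔥ᗮ) Bt) (V W : G) :
    sfunDeriv br 𝔥 𝔨 pninv Bt V W ∈ 𝔨ᗮ :=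
  sub_mem
    (Submodule.smul_mem _ _ (hinv _ (hpair.br_mem_orthogonal hLie
      (hBt.1 _ (pr_mem _ V)).1 (pr_mem _ W))))
    (Submodule.smul_mem _ _ (hinv _ (hpair.br_mem_orthogonal' hLie
      (hBt.1 _ (pr_mem _ W)).1 (pr_mem _ V))))

theorem inner_rmDeriv_of_mem_inf (hLie : IsLieQ br) (hpair : IsToralPair br 𝔥 𝔨)
    (hinv : ∀ x ∈ 𝔨ᗮ, pninv x ∈ 𝔨ᗮ) (hBt : SymOn (𝔨 ⊓ 𝔥ᗮ) Bt) {T u : G}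
    (hT : T ∈ 𝔨 ⊓ 𝔥ᗮ) (hu : u ∈ 𝔨 ⊓ 𝔥ᗮ) (V : G) :
    ⟪u, rmDeriv br 𝔥 𝔨 pn pninv Bt T V u⟫ = 0 := by
  have hS₀ : ∀ {t}, t ∈ 𝔨 ⊓ 𝔥ᗮ → ∀ x, sfunBilin br 𝔥 𝔨 pn pninv 0 t x ∈ 𝔨ᗮ := fun ht x => by
    rw [sfunBilin_zero_apply_of_mem_inf ht]
    exact neg_mem (hpair.br_mem_orthogonal hLie ht.1 (pr_mem _ x))
  have hS₁ := sfunDeriv_mem (𝔥 := 𝔥) hLie hpair hinv hBt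
  have hmem : rmDeriv br 𝔥 𝔨 pn pninv Bt T V u ∈ 𝔨ᗮ := by
    simp only [rmDeriv, LinearMap.coe_mk, AddHom.coe_mk,
      hpair.br_eq_zero_of_mem_inf hLie hT.1 hu, pr_zero, map_zero, LinearMap.zero_apply,
      sub_zero]
    exact neg_mem (sub_mem (sub_mem (add_mem (hS₀ hT _) (hS₁ _ _)) (hS₀ hu _)) (hS₁ _ _))
  exact (Submodule.mem_orthogonal 𝔨 _).1 hmem u hu.1

theorem rmDeriv_apply_of_mem_orthogonal (hLie : IsLieQ br) (hpair : IsToralPair br 𝔥 𝔨)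
    (hinv : ∀ x ∈ 𝔨ᗮ, pninv x ∈ 𝔨ᗮ) (hinvComm : CommAd br 𝔨 pninv)
    (hBt : SymOn (𝔨 ⊓ 𝔥ᗮ) Bt) {T X : G} (hT : T ∈ 𝔨 ⊓ 𝔥ᗮ) (hX : X ∈ 𝔨ᗮ) (V : G) :
    rmDeriv br 𝔥 𝔨 pn pninv Bt T V X
      = sfunBilin br 𝔥 𝔨 pn pninv 0 X (sfunDeriv br 𝔥 𝔨 pninv Bt T V)
        - sfunDeriv br 𝔥 𝔨 pninv Bt T (sfunBilin br 𝔥 𝔨 pn pninv 0 X V) := by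
  set k := Bt (pr (𝔨 ⊓ 𝔥ᗮ) V)
  have hk : k ∈ 𝔨 ⊓ 𝔥ᗮ := hBt.1 _ (pr_mem _ V)
  have hTX : br T X ∈ 𝔨ᗮ := hpair.br_mem_orthogonal hLie hT.1 hX
  -- `ad T` commutes with `P_𝔫⁻¹` and, as `[T, k] = 0`, with `ad k`
  have hcomm : br T (pninv (br X k)) = pninv (br (br T X) k) := by
    rw [← hinvComm T hT.1 _ (hpair.br_mem_orthogonal' hLie hk.1 hX), hLie.br_br,
      hpair.br_eq_zero_of_mem_inf hLie hT.1 hk, map_zero, add_zero]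
  have hA : sfunBilin br 𝔥 𝔨 pn pninv 0 T (sfunDeriv br 𝔥 𝔨 pninv Bt X V)
      = (2⁻¹ : ℝ) • br T (pninv (br X k)) := by
    rw [sfunBilin_zero_apply_of_mem_inf hT, pr_eq_self (sfunDeriv_mem hLie hpair hinv hBt X V),
      sfunDeriv_apply_of_mem_orthogonal hX]
    simp [k]
  have hD : sfunDeriv br 𝔥 𝔨 pninv Bt X (sfunBilin br 𝔥 𝔨 pn pninv 0 T V) = 0 := by
    rw [sfunDeriv_apply_of_mem_orthogonal hX, sfunBilin_zero_apply_of_mem_inf hT, pr_neg,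
      pr_eq_zero (Submodule.orthogonal_le inf_le_left
        (hpair.br_mem_orthogonal hLie hT.1 (pr_mem _ V)))]
    simp
  have hE : sfunDeriv br 𝔥 𝔨 pninv Bt (pr 𝔥ᗮ (br T X)) V
      = -((2⁻¹ : ℝ) • pninv (br (br T X) k)) := by
    rw [pr_eq_self (hpair.orthogonal_le hTX), sfunDeriv_apply_of_mem_orthogonal hTX]
  simp only [rmDeriv, LinearMap.coe_mk, AddHom.coe_mk, hA, hD, hE, hcomm]
  module

theorem inner_sfunDeriv_of_mem_inf (hLie : IsLieQ br) (hpair : IsToralPair br 𝔥 𝔨)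
    (hinv : SymOn 𝔨ᗮ pninv) (hBt : SymOn (𝔨 ⊓ 𝔥ᗮ) Bt) {T X : G} (hT : T ∈ 𝔨 ⊓ 𝔥ᗮ)
    (hX : X ∈ 𝔨ᗮ) (x : G) :
    ⟪X, sfunDeriv br 𝔥 𝔨 pninv Bt T x⟫ = -(2⁻¹ * ⟪br (Bt T) (pninv X), x⟫) := by
  have hk : Bt T ∈ 𝔨 := (hBt.1 T hT).1
  rw [sfunDeriv_apply_of_mem_inf hT, real_inner_smul_right,
    ← hinv.2 X hX _ (hpair.br_mem_orthogonal hLie hk (pr_mem _ x)), hLie.inner_br_right,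
    inner_pr_right_of_mem (hpair.br_mem_orthogonal hLie hk (hinv.1 X hX)), mul_neg]

theorem inner_sfunBilin_zero_of_mem_orthogonal (hpair : IsToralPair br 𝔥 𝔨)
    (hinv : SymOn 𝔨ᗮ pninv) {X g : G} (hX : X ∈ 𝔨ᗮ) (hg : g ∈ 𝔨ᗮ) (V : G) :
    ⟪g, sfunBilin br 𝔥 𝔨 pn pninv 0 X V⟫
      = -(2⁻¹ * ⟪g, br X (pr 𝔨ᗮ V)⟫)
        - 2⁻¹ * ⟪pninv g, br X (pn (pr 𝔨ᗮ V)) - br (pn X) (pr 𝔨ᗮ V)⟫ := by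
  rw [sfunBilin_zero_apply_of_mem_orthogonal hX, inner_sub_right, inner_neg_right,
    real_inner_smul_right, real_inner_smul_right, inner_pr_right_of_mem (hpair.orthogonal_le hg),
    ← hinv.2 g hg _ (sub_mem (pr_mem _ _) (pr_mem _ _)), ← pr_sub,
    inner_pr_right_of_mem (hinv.1 g hg)]

variable {ι : Type*} [Fintype ι] (b : OrthonormalBasis ι ℝ 𝔨ᗮ)

theorem sum_inner_sfunBilin_zero_self_eq_zero (hLie : IsLieQ br) (hpair : IsToralPair br 𝔥 𝔨)
    (hpn : SymOn 𝔨ᗮ pn) (hpninv : InvOn' 𝔨ᗮ pn pninv) {w : G} (hw : w ∈ 𝔨ᗮ) :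
    ∑ j, ⟪(b j : G), sfunBilin br 𝔥 𝔨 pn pninv 0 (b j) w⟫ = 0 := by
  have hinv := hpninv.symOn hpn
  have hterm : ∀ j, ⟪(b j : G), sfunBilin br 𝔥 𝔨 pn pninv 0 (b j) w⟫
      = 2⁻¹ * ⟪br (b j) (pninv (b j)), pn w⟫ - 2⁻¹ * ⟪br (pn (b j)) (pninv (b j)), w⟫ :=
    fun j => by
      rw [inner_sfunBilin_zero_of_mem_orthogonal hpair hinv (b j).2 (b j).2, pr_eq_self hw,
        hLie.inner_br_right, hLie.alt, inner_zero_left, inner_sub_right,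
        hLie.inner_br_right (b j : G), hLie.inner_br_right (pn (b j))]
      ring
  rw [Finset.sum_congr rfl fun j _ => hterm j, Finset.sum_sub_distrib, ← Finset.mul_sum,
    ← Finset.mul_sum, ← sum_inner, ← sum_inner, hLie.sum_br_apply_eq_zero b hinv,
    hLie.sum_br_apply_inv_eq_zero b hpn hpninv, inner_zero_left, inner_zero_left, mul_zero,
    sub_zero]

theorem sum_inner_sfunDeriv_sfunBilin_zero_eq_zero (hLie : IsLieQ br)
    (hpair : IsToralPair br 𝔥 𝔨) (hmax : NoTrivial br 𝔨) (hpn : SymOn 𝔨ᗮ pn)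
    (hpninv : InvOn' 𝔨ᗮ pn pninv) (hinvComm : CommAd br 𝔨 pninv) (hBt : SymOn (𝔨 ⊓ 𝔥ᗮ) Bt)
    {T : G} (hT : T ∈ 𝔨 ⊓ 𝔥ᗮ) (V : G) :
    ∑ j, ⟪(b j : G), sfunDeriv br 𝔥 𝔨 pninv Bt T (sfunBilin br 𝔥 𝔨 pn pninv 0 (b j) V)⟫ = 0 := by
  have hinv := hpninv.symOn hpn
  have hk : Bt T ∈ 𝔨 ⊓ 𝔥ᗮ := hBt.1 T hT
  set Y := pr 𝔨ᗮ V
  have hterm : ∀ j, ⟪(b j : G),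
      sfunDeriv br 𝔥 𝔨 pninv Bt T (sfunBilin br 𝔥 𝔨 pn pninv 0 (b j) V)⟫
      = 4⁻¹ * (⟪br (pn (b j)) (pninv (br (Bt T) (pninv (b j)))), Y⟫
          - ⟪br (b j) (br (Bt T) (pninv (b j))), Y⟫)
        - 4⁻¹ * ⟪br (b j) (pninv (br (Bt T) (pninv (b j)))), pn Y⟫ := fun j => by
    rw [inner_sfunDeriv_of_mem_inf hLie hpair hinv hBt hT (b j).2,
      inner_sfunBilin_zero_of_mem_orthogonal hpair hinv (b j).2
        (hpair.br_mem_orthogonal hLie hk.1 (hinv.1 _ (b j).2)),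
      inner_sub_right, hLie.inner_br_right (b j : G), hLie.inner_br_right (b j : G),
      hLie.inner_br_right (pn (b j))]
    ring
  rw [Finset.sum_congr rfl fun j _ => hterm j, Finset.sum_sub_distrib, ← Finset.mul_sum,
    ← Finset.mul_sum, Finset.sum_sub_distrib, ← sum_inner, ← sum_inner, ← sum_inner,
    sum_br_apply_inv_br_inv_eq b hpn hpninv hinvComm hk.1,
    inner_sum_br_inv_br_inv_eq_zero hLie hpair hmax b hinv hinvComm hk (hpn.1 _ (pr_mem _ V))]
  simp

theorem sum_inner_rmDeriv_eq_zero (hLie : IsLieQ br) (hpair : IsToralPair br 𝔥 𝔨)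
    (hmax : NoTrivial br 𝔨) (hpn : SymOn 𝔨ᗮ pn) (hpninv : InvOn' 𝔨ᗮ pn pninv)
    (hinvComm : CommAd br 𝔨 pninv) (hBt : SymOn (𝔨 ⊓ 𝔥ᗮ) Bt) {T : G} (hT : T ∈ 𝔨 ⊓ 𝔥ᗮ)
    (V : G) :
    ∑ j, ⟪(b j : G), rmDeriv br 𝔥 𝔨 pn pninv Bt T V (b j)⟫ = 0 := by
  simp only [rmDeriv_apply_of_mem_orthogonal hLie hpair hpninv.1 hinvComm hBt hT (b _).2,
    inner_sub_right, Finset.sum_sub_distrib,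
    sum_inner_sfunBilin_zero_self_eq_zero b hLie hpair hpn hpninv
      (sfunDeriv_mem hLie hpair hpninv.1 hBt T V),
    sum_inner_sfunDeriv_sfunBilin_zero_eq_zero b hLie hpair hmax hpn hpninv hinvComm hBt hT,
    sub_zero]

theorem ricDeriv_eq_zero_of_mem_inf (hLie : IsLieQ br) (hpair : IsToralPair br 𝔥 𝔨)
    (hmax : NoTrivial br 𝔨) (hpn : SymOn 𝔨ᗮ pn) (hpninv : InvOn' 𝔨ᗮ pn pninv)
    (hinvComm : CommAd br 𝔨 pninv) (hBt : SymOn (𝔨 ⊓ 𝔥ᗮ) Bt) {T : G} (hT : T ∈ 𝔨 ⊓ 𝔥ᗮ)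
    (V : G) :
    ricDeriv br 𝔥 𝔨 pn pninv Bt T V = 0 := by
  rw [ricDeriv, (stdOrthonormalBasis ℝ 𝔥ᗮ).sum_inner_apply_eq_add
      (stdOrthonormalBasis ℝ ↥(𝔨 ⊓ 𝔥ᗮ)) (stdOrthonormalBasis ℝ 𝔨ᗮ) inf_le_right
      hpair.orthogonal_le (fun _ => hpair.pr_add_pr),
    Finset.sum_eq_zero fun a _ =>
      inner_rmDeriv_of_mem_inf hLie hpair hpninv.1 hBt hT (stdOrthonormalBasis ℝ _ a).2 V,
    sum_inner_rmDeriv_eq_zero _ hLie hpair hmax hpn hpninv hinvComm hBt hT, add_zero]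

end Vanishing

theorem diff_extRic_vertical
    (hLie : IsLieQ br) (𝔥 𝔨 : Submodule ℝ G) (hpair : IsToralPair br 𝔥 𝔨)
    (hmax : NoTrivial br 𝔨)
    (pn pninv : G →L[ℝ] G)
    (hpn : SymOn 𝔨ᗮ pn) (hpncomm : CommAd br 𝔨 pn)
    (hpninv : InvOn' 𝔨ᗮ pn pninv)
    (Bt : G →L[ℝ] G) (hBt : SymOn (𝔨 ⊓ 𝔥ᗮ) Bt)
    (Ric : ℝ → (G →L[ℝ] G))
    (hRic : ∀ s : ℝ, IsExtRic br 𝔥 𝔨 (s • Bt) pn pninv (Ric s)) :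
    ∃ D : G →L[ℝ] G, HasDerivAt Ric D 0 ∧ ∀ T ∈ 𝔨 ⊓ 𝔥ᗮ, D T = 0 := by
  obtain ⟨D, hD, hDinner⟩ := hasDerivAt_zero_of_inner_quadratic
    (fun v w => ricDeriv br 𝔥 𝔨 pn pninv Bt (pr 𝔥ᗮ v) (pr 𝔥ᗮ w)) fun v w => by
      obtain ⟨γ, hγ⟩ := RicBilin_smul br 𝔥 𝔨 pn pninv Bt (pr 𝔥ᗮ v) (pr 𝔥ᗮ w)
      exact ⟨_, γ, fun s => ((hRic s).inner_apply v w).trans (hγ s)⟩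
  refine ⟨D, hD, fun T hT => ext_inner_right ℝ fun w => ?_⟩
  rw [hDinner, pr_eq_self hT.2, inner_zero_left, ricDeriv_eq_zero_of_mem_inf hLie hpair hmax hpn
    hpninv (hpninv.commAd hLie hpair hpncomm) hBt hT]
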